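/- arXiv:1004.4190 — 6 statements merged into one kernel-verified Lean document; each statement's English description precedes it below -/
import Mathlib

section
/- Let A be a complete normed algebra over ℂ (a Banach algebra), let A, B ∈ A and s ∈ ℂ. If the commutator satisfies A·B − B·A = s·B, then exp(A)·exp(B) = exp((e^s)·B)·exp(A). -/
/-!
The relation says `B * (A + s) = A * B`: `B` intertwines `A + s` with `A`, hence also their
exponentials, and `exp (A + s) = eˢ exp A`. So `exp A * B = (eˢ • B) * exp A`, i.e. `exp A`
intertwines `B` with `eˢ • B`, hence also `exp B` with `exp (eˢ • B)`.
-/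

open NormedSpace

theorem semiconjBy_add_smul_one_of_mul_sub_mul_eq_smul {R 𝔄 : Type*} [CommRing R] [Ring 𝔄]
    [Algebra R 𝔄] {A B : 𝔄} {s : R} (h : A * B - B * A = s • B) :
    SemiconjBy B (A + s • 1) A := by
  rw [SemiconjBy, mul_add, mul_smul_one, ← h, add_sub_cancel]

section RCLike

variable {𝕂 𝔄 : Type*} [RCLike 𝕂] [NormedRing 𝔄] [NormedAlgebra 𝕂 𝔄] [CompleteSpace 𝔄]

theorem exp_add_smul_one (A : 𝔄) (s : 𝕂) : exp (A + s • 1) = exp s • exp A := by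
  let : NormedAlgebra ℚ 𝔄 := .restrictScalars ℚ 𝕂 𝔄
  rw [exp_add_of_commute ((Commute.one_right A).smul_right s), ← Algebra.algebraMap_eq_smul_one,
    ← algebraMap_exp_comm, Algebra.algebraMap_eq_smul_one, mul_smul_one]

theorem semiconjBy_exp_smul_of_mul_sub_mul_eq_smul {A B : 𝔄} {s : 𝕂}
    (h : A * B - B * A = s • B) : SemiconjBy (exp A) B (exp s • B) := by
  let : NormedAlgebra ℚ 𝔄 := .restrictScalars ℚ 𝕂 𝔄
  have hexp := (semiconjBy_add_smul_one_of_mul_sub_mul_eq_smul h).exp_right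
  rw [SemiconjBy, exp_add_smul_one, mul_smul_comm] at hexp
  rw [SemiconjBy, ← hexp, smul_mul_assoc]

end RCLike

/-- the braiding identity `exp A * exp B = exp (eˢ • B) * exp A`
in a complex Banach algebra, assuming `[A, B] = s • B`. -/
theorem exp_braiding {𝔄 : Type*} [NormedRing 𝔄] [NormedAlgebra ℂ 𝔄] [CompleteSpace 𝔄]
    (A B : 𝔄) (s : ℂ) (h : A * B - B * A = s • B) :
    NormedSpace.exp A * NormedSpace.exp B =
      NormedSpace.exp (Complex.exp s • B) * NormedSpace.exp A := by
  let : NormedAlgebra ℚ 𝔄 := .restrictScalars ℚ ℂ 𝔄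
  rw [Complex.exp_eq_exp_ℂ]
  exact (semiconjBy_exp_smul_of_mul_sub_mul_eq_smul h).exp_right
end

section
/- Let a be a positive real algebraic number, let P ∈ ℚ[x] be its (monic) minimal polynomial over ℚ, and let Q_a ∈ ℤ[x] be the primitive integer polynomial obtained by clearing denominators of P (so P = c·Q_a with c⁻¹ the least common multiple of the denominators of the coefficients of P, and the coefficients of Q_a have greatest common divisor 1). Then the kernel of the evaluation ring homomorphism ℤ[x,x⁻¹] → ℝ sending x to a equals the ideal of ℤ[x,x⁻¹] generated by Q_a; consequently the subring ℤ[a,a⁻¹] of ℝ (whose underlying additive group is B_a) is isomorphic as a ring to ℤ[x,x⁻¹]/(Q_a). -/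
/-!
Over `ℚ` the polynomials vanishing at `a` are the multiples of the minimal polynomial, and by
Gauss's lemma the integer polynomials vanishing at `a` are the multiples of the primitive `Q`.
Every Laurent polynomial is a polynomial times the unit `x⁻ⁿ`, so the kernel on `ℤ[x,x⁻¹]` is
generated by `Q` too; the isomorphism is then the first isomorphism theorem, since the image of
the evaluation is `ℤ[a,a⁻¹]`.
-/

noncomputable section

/-- `B a` is the additive subgroup of `ℝ` generated by the integer powers of `a`. -/
def B (a : ℝ) : AddSubgroup ℝ := AddSubgroup.closure {x : ℝ | ∃ n : ℤ, x = a ^ n}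

/-- Evaluation of Laurent polynomials over `ℤ` at the nonzero real number `a`
(the ring homomorphism `ℤ[x,x⁻¹] → ℝ`, `x ↦ a`). -/
def laurentEval (a : ℝ) (ha : a ≠ 0) : LaurentPolynomial ℤ →ₐ[ℤ] ℝ :=
  AddMonoidAlgebra.lift ℤ ℝ ℤ
    ((Units.coeHom ℝ).comp (zpowersHom ℝˣ (Units.mk0 a ha)))

open Polynomial LaurentPolynomial

theorem Polynomial.IsPrimitive.ker_aeval_eq_span_of_minpoly_eq_smul {R K A : Type*}
    [CommRing R] [IsDomain R] [NormalizedGCDMonoid R] [Field K] [Algebra R K]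
    [IsFractionRing R K] [Ring A] [Algebra K A] [Algebra R A] [IsScalarTower R K A]
    {x : A} {Q : R[X]} {c : K} (hQ : Q.IsPrimitive) (hc : c ≠ 0)
    (h : minpoly K x = c • Q.map (algebraMap R K)) :
    RingHom.ker (aeval x : R[X] →ₐ[R] A) = Ideal.span {Q} := by
  ext p
  rw [RingHom.mem_ker, Ideal.mem_span_singleton, hQ.dvd_iff_fraction_map_dvd_fraction_map K,
    ← aeval_map_algebraMap K, ← minpoly.dvd_iff, h, smul_eq_C_mul, C_mul_dvd hc]

theorem LaurentPolynomial.ker_eq_map_ker_comp_toLaurent {R S : Type*} [CommRing R] [Semiring S]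
    (f : R[T;T⁻¹] →+* S) :
    RingHom.ker f = (RingHom.ker (f.comp toLaurent)).map toLaurent := by
  refine le_antisymm (fun g hg => ?_) (Ideal.map_le_iff_le_comap.mpr (RingHom.comap_ker _ _).ge)
  obtain ⟨n, p, hp⟩ := exists_T_pow g
  have hp_ker : p ∈ RingHom.ker (f.comp toLaurent) := by
    rw [RingHom.mem_ker] at hg ⊢
    rw [RingHom.comp_apply, hp, map_mul, hg, zero_mul]
  have hg_eq : g = toLaurent p * T (-n) := by
    rw [hp, mul_T_assoc, add_neg_cancel, T_zero, mul_one]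
  rw [hg_eq]
  exact Ideal.mul_mem_right _ _ (Ideal.mem_map_of_mem _ hp_ker)

theorem laurentEval_T (a : ℝ) (ha : a ≠ 0) (n : ℤ) : laurentEval a ha (T n) = a ^ n := by
  rw [laurentEval, T, AddMonoidAlgebra.lift_single]
  simp [Units.val_zpow_eq_zpow_val]

theorem laurentEval_comp_toLaurent (a : ℝ) (ha : a ≠ 0) :
    (laurentEval a ha : ℤ[T;T⁻¹] →+* ℝ).comp toLaurent = (aeval a : ℤ[X] →ₐ[ℤ] ℝ) := by
  have : (laurentEval a ha).comp toLaurentAlg = aeval a := by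
    apply Polynomial.algHom_ext
    rw [AlgHom.comp_apply, toLaurentAlg_apply, toLaurent_X, laurentEval_T, zpow_one, aeval_X]
  exact congrArg AlgHom.toRingHom this

theorem zpow_mem_subringClosure_pair {K : Type*} [DivisionRing K] (a : K) (n : ℤ) :
    a ^ n ∈ Subring.closure ({a, a⁻¹} : Set K) := by
  rcases n with k | k
  · rw [Int.ofNat_eq_natCast, zpow_natCast]
    exact pow_mem (Subring.subset_closure (Set.mem_insert _ _)) k
  · rw [zpow_negSucc, ← inv_pow]
    exact pow_mem (Subring.subset_closure (Set.mem_insert_of_mem _ (Set.mem_singleton _))) (k + 1)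

theorem range_laurentEval (a : ℝ) (ha : a ≠ 0) :
    (laurentEval a ha : ℤ[T;T⁻¹] →+* ℝ).range = Subring.closure ({a, a⁻¹} : Set ℝ) := by
  refine le_antisymm ?_ (Subring.closure_le.mpr ?_)
  · rintro x ⟨f, rfl⟩
    induction f using LaurentPolynomial.induction_on' with
    | add p q hp hq => rw [map_add]; exact add_mem hp hq
    | C_mul_T n m =>
      rw [RingHom.coe_coe, map_mul, LaurentPolynomial.C_eq_algebraMap, AlgHom.commutes,
        laurentEval_T, algebraMap_int_eq, eq_intCast]
      exact mul_mem (intCast_mem _ m) (zpow_mem_subringClosure_pair a n)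
  · rintro x (rfl | rfl)
    · exact ⟨T 1, by rw [RingHom.coe_coe, laurentEval_T, zpow_one]⟩
    · exact ⟨T (-1), by rw [RingHom.coe_coe, laurentEval_T, zpow_neg_one]⟩

theorem laurent_ker_eq_span_and_iso_general (a : ℝ) (ha : 0 < a)
    (Q : Polynomial ℤ) (hQprim : Q.IsPrimitive)
    (c : ℚ) (hc : c ≠ 0) (hPQ : minpoly ℚ a = c • Q.map (Int.castRingHom ℚ)) :
    RingHom.ker ((laurentEval a ha.ne') : LaurentPolynomial ℤ →+* ℝ)
        = Ideal.span {Polynomial.toLaurent Q} ∧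
    Nonempty ((LaurentPolynomial ℤ ⧸ Ideal.span {Polynomial.toLaurent Q}) ≃+*
      Subring.closure ({a, a⁻¹} : Set ℝ)) := by
  have hker : RingHom.ker (laurentEval a ha.ne' : ℤ[T;T⁻¹] →+* ℝ) = Ideal.span {toLaurent Q} := by
    rw [ker_eq_map_ker_comp_toLaurent, laurentEval_comp_toLaurent, RingHom.ker_coe_toRingHom,
      hQprim.ker_aeval_eq_span_of_minpoly_eq_smul hc hPQ, Ideal.map_span, Set.image_singleton]
  exact ⟨hker, ⟨(Ideal.quotEquivOfEq hker.symm).trans <| (RingHom.quotientKerEquivRange _).trans <|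
    RingEquiv.subringCongr (range_laurentEval a ha.ne')⟩⟩

/-- for a positive algebraic real `a` with monic minimal polynomial `P`
over `ℚ` and `Q` the primitive integer polynomial with `P = c • Q`, the kernel of the
evaluation `ℤ[x,x⁻¹] → ℝ` at `a` is the ideal generated by `Q`; consequently
`ℤ[a,a⁻¹] ≅ ℤ[x,x⁻¹]/(Q)` as rings. -/
theorem laurent_ker_eq_span_and_iso (a : ℝ) (ha : 0 < a) (halg : IsAlgebraic ℚ a)
    (Q : Polynomial ℤ) (hQprim : Q.IsPrimitive)
    (c : ℚ) (hc : c ≠ 0) (hPQ : minpoly ℚ a = c • Q.map (Int.castRingHom ℚ)) :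
    RingHom.ker ((laurentEval a ha.ne') : LaurentPolynomial ℤ →+* ℝ)
        = Ideal.span {Polynomial.toLaurent Q} ∧
    Nonempty ((LaurentPolynomial ℤ ⧸ Ideal.span {Polynomial.toLaurent Q}) ≃+*
      Subring.closure ({a, a⁻¹} : Set ℝ)) :=
  laurent_ker_eq_span_and_iso_general a ha Q hQprim c hc hPQ
end
end

section
/- Let m ≥ 2 and q ≥ 1 be integers. Then the quotient additive group ℤ[1/m] / (m^q − 1)·ℤ[1/m] is a cyclic group of order m^q − 1, i.e. it is isomorphic to ℤ/(m^q − 1)ℤ. -/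
/-!
Since `(m^q - 1) x = m^q x - x`, multiplication by `m^q` is the identity on
`ℤ[1/m] / (m^q - 1)·ℤ[1/m]`. As `m^(q l)` clears the denominator of `j / m^l`, every class
contains an integer, so `ℤ` maps onto the quotient. An integer `j` dies in the quotient iff
`(m^q - 1) k = m^l j` for some `k` and `l`; as `m^q - 1` is coprime to `m`, this says
`m^q - 1 ∣ j`.
-/

noncomputable section

lemma B.zpow_mul_mem {a : ℝ} (ha : a ≠ 0) (m : ℤ) {x : ℝ} (hx : x ∈ B a) :
    a ^ m * x ∈ B a := by
  have h : (B a).map (AddMonoidHom.mulLeft (a ^ m)) ≤ B a := by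
    rw [B, AddMonoidHom.map_closure]
    refine (AddSubgroup.closure_le _).2 ?_
    rintro y ⟨x, ⟨n, rfl⟩, rfl⟩
    exact AddSubgroup.subset_closure ⟨m + n, (zpow_add₀ ha m n).symm⟩
  exact h (AddSubgroup.mem_map.2 ⟨x, hx, rfl⟩)

/-- Multiplication by `m^q − 1` as an additive endomorphism of `ℤ[1/m] = B m`;
its range is the subgroup `(m^q − 1)·ℤ[1/m]`. -/
def scaleHom (m q : ℕ) (hm : 2 ≤ m) : ↥(B (m : ℝ)) →+ ↥(B (m : ℝ)) where
  toFun x := ⟨((m : ℝ) ^ q - 1) * x, by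
    have hm0 : (m : ℝ) ≠ 0 := Nat.cast_ne_zero.mpr (by omega)
    have h1 : (m : ℝ) ^ (q : ℤ) * (x : ℝ) ∈ B (m : ℝ) := B.zpow_mul_mem hm0 q x.2
    have heq : ((m : ℝ) ^ q - 1) * (x : ℝ) = (m : ℝ) ^ (q : ℤ) * (x : ℝ) - (x : ℝ) := by
      rw [zpow_natCast]; ring
    rw [heq]
    exact sub_mem h1 x.2⟩
  map_zero' := Subtype.ext (by simp)
  map_add' x y := Subtype.ext (by simp [mul_add])

lemma intCast_mem_B (a : ℝ) (j : ℤ) : (j : ℝ) ∈ B a := by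
  have h1 : (1 : ℝ) ∈ B a := AddSubgroup.subset_closure ⟨0, (zpow_zero a).symm⟩
  simpa using zsmul_mem h1 j

lemma exists_pow_mul_eq_intCast_of_mem_B {m : ℕ} (hm : m ≠ 0) {x : ℝ} (hx : x ∈ B m) :
    ∃ l : ℕ, ∃ j : ℤ, (m : ℝ) ^ l * x = j := by
  induction hx using AddSubgroup.closure_induction with
  | mem y hy =>
    obtain ⟨n, rfl⟩ := hy
    refine ⟨n.natAbs, m ^ (n.natAbs + n).toNat, ?_⟩
    rw [← zpow_natCast, ← zpow_add₀ (by exact_mod_cast hm)]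
    push_cast
    rw [← zpow_natCast, Int.toNat_of_nonneg (by linarith [neg_abs_le n])]
  | zero => exact ⟨0, 0, by simp⟩
  | add x y _ _ hx hy =>
    obtain ⟨l, j, hj⟩ := hx
    obtain ⟨l', j', hj'⟩ := hy
    exact ⟨l + l', j * m ^ l' + j' * m ^ l, by
      push_cast; linear_combination (m : ℝ) ^ l' * hj + (m : ℝ) ^ l * hj'⟩
  | neg x _ hx =>
    obtain ⟨l, j, hj⟩ := hx
    exact ⟨l, -j, by push_cast; linear_combination -hj⟩

lemma isCoprime_pow_sub_one_self {R : Type*} [CommRing R] (a : R) {q : ℕ} (hq : q ≠ 0) :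
    IsCoprime (a ^ q - 1) a :=
  ⟨-1, a ^ (q - 1), by rw [mul_comm, pow_sub_one_mul hq]; ring⟩

section

variable {m q : ℕ} (hm : 2 ≤ m)

lemma mk_eq_mk_of_val_eq_pow_mul {x y : B m} (h : (y : ℝ) = (m : ℝ) ^ q * x) :
    (y : B m ⧸ (scaleHom m q hm).range) = x := by
  refine (QuotientAddGroup.eq).2 ⟨-x, Subtype.ext ?_⟩
  change ((m : ℝ) ^ q - 1) * -(x : ℝ) = -(y : ℝ) + x
  rw [h]
  ring

lemma mk_eq_mk_of_val_eq_pow_mul_mul (l : ℕ) {x y : B m}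
    (h : (y : ℝ) = (m : ℝ) ^ (q * l) * x) :
    (y : B m ⧸ (scaleHom m q hm).range) = x := by
  induction l generalizing y with
  | zero => exact congrArg _ (Subtype.ext (by simpa using h))
  | succ l ih =>
    have hm0 : (m : ℝ) ≠ 0 := by norm_cast; omega
    let z : B m := ⟨(m : ℝ) ^ (q * l) * x, by
      simpa only [zpow_natCast] using B.zpow_mul_mem hm0 (q * l : ℕ) x.2⟩
    calc (y : B m ⧸ (scaleHom m q hm).range) = z :=
          mk_eq_mk_of_val_eq_pow_mul hm (by rw [h, mul_add, mul_one, pow_add]; ring)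
      _ = x := ih rfl

variable (m q) in
def intToQuotient : ℤ →+ B m ⧸ (scaleHom m q hm).range :=
  (QuotientAddGroup.mk' _).comp ((Int.castAddHom ℝ).codRestrict (B m) (intCast_mem_B m))

@[simp]
lemma intToQuotient_apply (j : ℤ) :
    intToQuotient m q hm j = ((⟨j, intCast_mem_B m j⟩ : B m) : B m ⧸ (scaleHom m q hm).range) :=
  rfl

lemma intToQuotient_surjective (hq : 1 ≤ q) : Function.Surjective (intToQuotient m q hm) := by
  intro y
  obtain ⟨x, rfl⟩ := QuotientAddGroup.mk_surjective y
  obtain ⟨l, j, hj⟩ := exists_pow_mul_eq_intCast_of_mem_B (by omega) x.2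
  refine ⟨j * m ^ ((q - 1) * l), mk_eq_mk_of_val_eq_pow_mul_mul hm l ?_⟩
  obtain ⟨q, rfl⟩ := Nat.exists_eq_add_of_le' hq
  show ((j * m ^ ((q + 1 - 1) * l) : ℤ) : ℝ) = _
  rw [Nat.add_sub_cancel, add_mul, one_mul, pow_add, mul_assoc, hj]
  push_cast
  ring

lemma intToQuotient_ker (hq : 1 ≤ q) :
    (intToQuotient m q hm).ker = AddSubgroup.zmultiples ((m ^ q - 1 : ℕ) : ℤ) := by
  have hN : ((m ^ q - 1 : ℕ) : ℤ) = (m : ℤ) ^ q - 1 := by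
    rw [Nat.cast_sub (Nat.one_le_pow q m (by omega)), Nat.cast_pow, Nat.cast_one]
  ext j
  rw [AddMonoidHom.mem_ker, intToQuotient_apply, QuotientAddGroup.eq_zero_iff,
    AddSubgroup.mem_zmultiples_iff, hN]
  constructor
  · rintro ⟨y, hy⟩
    obtain ⟨l, k, hk⟩ := exists_pow_mul_eq_intCast_of_mem_B (by omega) y.2
    have hy : ((m : ℝ) ^ q - 1) * y = j := congrArg Subtype.val hy
    have hdvd : ((m : ℤ) ^ q - 1) * k = m ^ l * j := by
      exact_mod_cast (by rw [← hk, ← hy]; ring : ((m : ℝ) ^ q - 1) * k = m ^ l * j)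
    have hcop : IsCoprime ((m : ℤ) ^ q - 1) ((m : ℤ) ^ l) :=
      (isCoprime_pow_sub_one_self _ (by omega)).pow_right
    obtain ⟨c, hc⟩ := hcop.dvd_of_dvd_mul_left ⟨k, hdvd.symm⟩
    exact ⟨c, by rw [hc, smul_eq_mul, mul_comm]⟩
  · rintro ⟨c, rfl⟩
    refine ⟨⟨c, intCast_mem_B m c⟩, Subtype.ext ?_⟩
    simp only [scaleHom, AddMonoidHom.coe_mk, ZeroHom.coe_mk, Int.zsmul_eq_mul]
    push_cast
    ring

end

/-- for integers `m ≥ 2`, `q ≥ 1`, the quotient group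
`ℤ[1/m] / (m^q − 1)·ℤ[1/m]` is cyclic of order `m^q − 1`, i.e. isomorphic to
`ℤ/(m^q − 1)ℤ`. -/
theorem quotient_zinv_cyclic (m q : ℕ) (hm : 2 ≤ m) (hq : 1 ≤ q) :
    Nonempty ((↥(B (m : ℝ)) ⧸ (scaleHom m q hm).range) ≃+ ZMod (m ^ q - 1)) :=
  ⟨(QuotientAddGroup.quotientKerEquivOfSurjective _ (intToQuotient_surjective hm hq)).symm.trans
    ((QuotientAddGroup.quotientAddEquivOfEq (intToQuotient_ker hm hq)).trans
      (Int.quotientZMultiplesNatEquivZMod _))⟩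
end
end

section
/- Let m ≥ 2 and q ≥ 1 be integers. The set of additive characters χ : ℤ[1/m] → ℝ/ℤ satisfying χ(m^q·x) = χ(x) for all x ∈ ℤ[1/m] (i.e., the fixed points of the q-th iterate of the automorphism α̂ of the solenoid S_m dual to the map b ↦ m·b) is finite, of cardinality exactly m^q − 1. -/
/-!
With `N = m^q - 1`, the condition `χ (m^q • x) = χ x` says exactly that `N • χ = 0`.
Since `N` is coprime to `m`, every `x ∈ ℤ[1/m]` can be written `x = k + N y` with `k ∈ ℤ` and
`y ∈ ℤ[1/m]`, and an integer lies in `N ℤ[1/m]` only if it lies in `N ℤ`; thus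
`ℤ[1/m] / N ℤ[1/m] ≅ ℤ/N`. Hence `χ ↦ χ 1` is a bijection from the characters killed by `N`
onto the `N`-torsion of `ℝ/ℤ`, which has `N` elements.
-/

noncomputable section

lemma ZMod.range_toAddCircle (N : ℕ) [NeZero N] :
    Set.range (ZMod.toAddCircle (N := N)) = {u : UnitAddCircle | N • u = 0} := by
  ext u
  constructor
  · rintro ⟨j, rfl⟩
    rw [Set.mem_ofPred_eq, ← map_nsmul, nsmul_eq_mul, ZMod.natCast_self, zero_mul, map_zero]
  · intro hu
    obtain ⟨k, -, rfl⟩ := (AddCircle.nsmul_eq_zero_iff (NeZero.pos N)).mp hu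
    exact ⟨k, by rw [ZMod.toAddCircle_natCast, mul_one]⟩

lemma UnitAddCircle.finite_nsmul_eq_zero {N : ℕ} (hN : N ≠ 0) :
    {u : UnitAddCircle | N • u = 0}.Finite := by
  have : NeZero N := ⟨hN⟩
  rw [← ZMod.range_toAddCircle]
  exact Set.finite_range _

lemma UnitAddCircle.ncard_nsmul_eq_zero {N : ℕ} (hN : N ≠ 0) :
    {u : UnitAddCircle | N • u = 0}.ncard = N := by
  have : NeZero N := ⟨hN⟩
  rw [← ZMod.range_toAddCircle, Set.ncard_range_of_injective (ZMod.toAddCircle_injective N),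
    Nat.card_zmod]

lemma one_mem_B (a : ℝ) : (1 : ℝ) ∈ B a :=
  AddSubgroup.subset_closure ⟨0, (zpow_zero a).symm⟩

def oneB (a : ℝ) : B a := ⟨1, one_mem_B a⟩

section

variable {m N : ℕ}

lemma exists_eq_int_div_pow_of_mem_B (hm : m ≠ 0) {x : ℝ} (hx : x ∈ B m) :
    ∃ (j : ℤ) (l : ℕ), x = j / (m : ℝ) ^ l := by
  have hm' : (m : ℝ) ≠ 0 := Nat.cast_ne_zero.mpr hm
  induction hx using AddSubgroup.closure_induction with
  | mem x hx =>
    obtain ⟨n, rfl⟩ := hx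
    refine ⟨(m : ℤ) ^ n.toNat, (-n).toNat, ?_⟩
    conv_lhs => rw [← Int.toNat_sub_toNat_neg n]
    rw [zpow_sub₀ hm', zpow_natCast, zpow_natCast]
    push_cast
    rfl
  | zero => exact ⟨0, 0, by simp⟩
  | add x y _ _ hx hy =>
    obtain ⟨j, l, rfl⟩ := hx
    obtain ⟨j', l', rfl⟩ := hy
    refine ⟨j * (m : ℤ) ^ l' + (m : ℤ) ^ l * j', l + l', ?_⟩
    rw [div_add_div _ _ (pow_ne_zero l hm') (pow_ne_zero l' hm'), pow_add]
    push_cast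
    rfl
  | neg x _ hx =>
    obtain ⟨j, l, rfl⟩ := hx
    exact ⟨-j, l, by push_cast; ring⟩

lemma exists_eq_zsmul_oneB_add_nsmul (hm : m ≠ 0) (hN : N.Coprime m) (x : B m) :
    ∃ (k : ℤ) (y : B m), x = k • oneB m + N • y := by
  obtain ⟨j, l, hx⟩ := exists_eq_int_div_pow_of_mem_B hm x.2
  obtain ⟨u, v, huv⟩ := (Nat.isCoprime_iff_coprime.mpr hN.symm).pow_left (m := l)
  refine ⟨u * j, v • x, Subtype.ext ?_⟩
  have hmx : ((m : ℤ) ^ l : ℝ) * x = j := by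
    rw [hx]; push_cast; field_simp
  have huv' : (u : ℝ) * ((m : ℤ) ^ l : ℤ) + v * N = 1 := by exact_mod_cast huv
  simp only [AddSubgroup.coe_add, AddSubgroup.coe_zsmul, AddSubgroup.coe_nsmul, oneB,
    zsmul_eq_mul, nsmul_eq_mul]
  push_cast at hmx huv' ⊢
  linear_combination (-x) * huv' + u * hmx

lemma natCast_dvd_of_zsmul_oneB_eq_nsmul (hm : m ≠ 0) (hN : N.Coprime m) {k : ℤ} {y : B m}
    (h : k • oneB m = N • y) : (N : ℤ) ∣ k := by
  obtain ⟨j, l, hy⟩ := exists_eq_int_div_pow_of_mem_B hm y.2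
  have hk : (k : ℝ) = N * (j / (m : ℝ) ^ l) := by
    simpa [oneB, hy] using congrArg Subtype.val h
  have hkj : k * (m : ℤ) ^ l = N * j := by
    have hm' : (m : ℝ) ^ l ≠ 0 := pow_ne_zero l (Nat.cast_ne_zero.mpr hm)
    have : (k : ℝ) * (m : ℝ) ^ l = N * j := by rw [hk]; field_simp
    exact_mod_cast this
  have hcop : IsCoprime (N : ℤ) ((m : ℤ) ^ l) := (Nat.isCoprime_iff_coprime.mpr hN).pow_right
  exact hcop.dvd_of_dvd_mul_right ⟨j, hkj⟩

end

section

variable {m N : ℕ} {A : Type*} [AddCommGroup A]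

lemma apply_eq_zsmul_apply_oneB {χ : B m →+ A} (hχ : N • χ = 0) {x y : B m} {k : ℤ}
    (hx : x = k • oneB m + N • y) : χ x = k • χ (oneB m) := by
  have hy : N • χ y = 0 := by rw [← AddMonoidHom.nsmul_apply, hχ, AddMonoidHom.zero_apply]
  rw [hx, map_add, map_zsmul, map_nsmul, hy, add_zero]

variable (hm : m ≠ 0) (hN : N.Coprime m)
include hm hN

lemma ext_oneB_of_nsmul_eq_zero {χ ψ : B m →+ A} (hχ : N • χ = 0) (hψ : N • ψ = 0)
    (h : χ (oneB m) = ψ (oneB m)) : χ = ψ := by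
  ext x
  obtain ⟨k, y, hx⟩ := exists_eq_zsmul_oneB_add_nsmul hm hN x
  rw [apply_eq_zsmul_apply_oneB hχ hx, apply_eq_zsmul_apply_oneB hψ hx, h]

lemma zsmul_eq_zsmul_of_nsmul_eq_zero {a : A} (ha : N • a = 0) {x y y' : B m} {k k' : ℤ}
    (hx : x = k • oneB m + N • y) (hx' : x = k' • oneB m + N • y') : k • a = k' • a := by
  have h : (k - k') • oneB m = N • (y' - y) := by
    rw [sub_smul, nsmul_sub, sub_eq_sub_iff_add_eq_add, ← hx, hx', add_comm]
  obtain ⟨t, ht⟩ := natCast_dvd_of_zsmul_oneB_eq_nsmul hm hN h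
  rw [← sub_eq_zero, ← sub_smul, ht, mul_comm, mul_zsmul, natCast_zsmul, ha, zsmul_zero]

def torsionCharacter (a : A) (ha : N • a = 0) : B m →+ A :=
  AddMonoidHom.mk' (fun x ↦ (exists_eq_zsmul_oneB_add_nsmul hm hN x).choose • a) fun x y ↦ by
    obtain ⟨y₁, hx⟩ := (exists_eq_zsmul_oneB_add_nsmul hm hN x).choose_spec
    obtain ⟨y₂, hy⟩ := (exists_eq_zsmul_oneB_add_nsmul hm hN y).choose_spec
    obtain ⟨y₃, hxy⟩ := (exists_eq_zsmul_oneB_add_nsmul hm hN (x + y)).choose_spec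
    rw [← add_smul]
    refine zsmul_eq_zsmul_of_nsmul_eq_zero hm hN ha hxy (y' := y₁ + y₂) ?_
    conv_lhs => rw [hx, hy]
    rw [add_smul, nsmul_add]
    abel

lemma torsionCharacter_apply {a : A} (ha : N • a = 0) {x y : B m} {k : ℤ}
    (hx : x = k • oneB m + N • y) : torsionCharacter hm hN a ha x = k • a :=
  have hx' := (exists_eq_zsmul_oneB_add_nsmul hm hN x).choose_spec.choose_spec
  zsmul_eq_zsmul_of_nsmul_eq_zero hm hN ha hx' hx

lemma torsionCharacter_apply_oneB {a : A} (ha : N • a = 0) :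
    torsionCharacter hm hN a ha (oneB m) = a := by
  rw [torsionCharacter_apply hm hN ha (k := 1) (y := 0) (by rw [one_smul, smul_zero, add_zero]),
    one_smul]

lemma nsmul_torsionCharacter {a : A} (ha : N • a = 0) : N • torsionCharacter hm hN a ha = 0 := by
  ext x
  obtain ⟨k, y, hx⟩ := exists_eq_zsmul_oneB_add_nsmul hm hN x
  rw [AddMonoidHom.nsmul_apply, torsionCharacter_apply hm hN ha hx, smul_comm, ha, smul_zero,
    AddMonoidHom.zero_apply]

theorem bijOn_apply_oneB :
    Set.BijOn (fun χ : B m →+ A ↦ χ (oneB m)) {χ | N • χ = 0} {a | N • a = 0} :=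
  ⟨fun χ hχ ↦ by rw [Set.mem_ofPred_eq, ← AddMonoidHom.nsmul_apply, hχ, AddMonoidHom.zero_apply],
    fun _ hχ _ hψ h ↦ ext_oneB_of_nsmul_eq_zero hm hN hχ hψ h,
    fun a ha ↦ ⟨torsionCharacter hm hN a ha, nsmul_torsionCharacter hm hN ha,
      torsionCharacter_apply_oneB hm hN ha⟩⟩

end

lemma AddMonoidHom.forall_apply_succ_nsmul_eq_iff {G A : Type*} [AddCommGroup G]
    [AddCommGroup A] (χ : G →+ A) (n : ℕ) : (∀ x, χ ((n + 1) • x) = χ x) ↔ n • χ = 0 := by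
  simp only [succ_nsmul, map_add, map_nsmul, add_eq_right, AddMonoidHom.ext_iff,
    AddMonoidHom.nsmul_apply, AddMonoidHom.zero_apply]

/-- for integers `m ≥ 2` and `q ≥ 1`, the set of additive characters
`χ : ℤ[1/m] → ℝ/ℤ` with `χ(m^q·x) = χ(x)` for all `x` (the fixed points of the `q`-th
iterate of the dual automorphism on the solenoid `S_m`) is finite of cardinality
exactly `m^q − 1`. -/
theorem card_periodic_characters (m q : ℕ) (hm : 2 ≤ m) (hq : 1 ≤ q) :
    {χ : ↥(B (m : ℝ)) →+ AddCircle (1 : ℝ) |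
        ∀ x : ↥(B (m : ℝ)), χ ((m ^ q) • x) = χ x}.Finite ∧
    {χ : ↥(B (m : ℝ)) →+ AddCircle (1 : ℝ) |
        ∀ x : ↥(B (m : ℝ)), χ ((m ^ q) • x) = χ x}.ncard = m ^ q - 1 := by
  obtain ⟨N, hmN⟩ : ∃ N, m ^ q = N + 1 :=
    ⟨m ^ q - 1, (Nat.sub_add_cancel (Nat.one_le_pow q m (by omega))).symm⟩
  have hN : N ≠ 0 := by have := Nat.one_lt_pow (by omega : q ≠ 0) hm; omega
  have hcop : N.Coprime m :=
    (Nat.coprime_self_add_right.mpr (Nat.coprime_one_right N)).coprime_dvd_right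
      (hmN ▸ dvd_pow_self m (by omega))
  have hbij := bijOn_apply_oneB (A := UnitAddCircle) (by omega : m ≠ 0) hcop
  simp only [hmN, AddMonoidHom.forall_apply_succ_nsmul_eq_iff, Nat.add_sub_cancel]
  rw [hbij.finite_iff_finite, hbij.ncard_eq]
  exact ⟨UnitAddCircle.finite_nsmul_eq_zero hN, UnitAddCircle.ncard_nsmul_eq_zero hN⟩
end
end

section
/- Let p > 2 be a real number and let c : ℕ* → ℕ* be any function with c_q ≥ 1 for all q. Set b_q := q·(q·c_q)^{2/p} for each q ≥ 1. Then the double series Σ_{q≥1} Σ_{n∈ℤ} q·c_q·(1 + (|n| + b_q)²)^{−p/2} converges. -/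
lemma key_bound (p : ℝ) (hp : 2 < p) (Q C : ℝ) (hQ : 1 ≤ Q) (hC : 1 ≤ C)
    (x : ℝ) (hx : 0 ≤ x) :
    Q * C * (1 + (x + Q * (Q * C) ^ (2 / p)) ^ 2) ^ (-(p / 2)) ≤
      Q ^ (-(p / 2)) * (x + 1) ^ (-(p / 2)) := by
  have hp0 : (0 : ℝ) < p := by linarith
  have hQ0 : (0 : ℝ) < Q := by linarith
  have hC0 : (0 : ℝ) < C := by linarith
  have hQC : (1 : ℝ) ≤ Q * C := one_le_mul_of_one_le_of_one_le hQ hC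
  set b : ℝ := Q * (Q * C) ^ (2 / p) with hb
  have hrpow1 : (1 : ℝ) ≤ (Q * C) ^ (2 / p) :=
    Real.one_le_rpow hQC (by positivity)
  have hb1 : (1 : ℝ) ≤ b := one_le_mul_of_one_le_of_one_le hQ hrpow1
  have hb0 : (0 : ℝ) < b := by linarith
  -- (x+1)*b ≤ (x+b)^2 ≤ 1+(x+b)^2
  have h1 : (x + 1) * b ≤ 1 + (x + b) ^ 2 := by
    have : (x + 1) * b ≤ (x + b) * (x + b) :=
      mul_le_mul (by linarith) (by linarith) (by linarith) (by linarith)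
    nlinarith
  have hpos : (0 : ℝ) < (x + 1) * b := by positivity
  have h2 : (1 + (x + b) ^ 2) ^ (-(p / 2)) ≤ ((x + 1) * b) ^ (-(p / 2)) :=
    Real.rpow_le_rpow_of_nonpos hpos h1 (by linarith)
  have h3 : ((x + 1) * b) ^ (-(p / 2)) = (x + 1) ^ (-(p / 2)) * b ^ (-(p / 2)) :=
    Real.mul_rpow (by linarith) (by linarith)
  -- b ^ (p/2) = Q ^ (p/2) * (Q*C)
  have hbp : b ^ (p / 2) = Q ^ (p / 2) * (Q * C) := by
    rw [hb, Real.mul_rpow (le_of_lt hQ0) (by positivity),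
      ← Real.rpow_mul (by positivity : (0:ℝ) ≤ Q * C)]
    have : 2 / p * (p / 2) = 1 := by field_simp
    rw [this, Real.rpow_one]
  have hkey : Q * C * b ^ (-(p / 2)) = Q ^ (-(p / 2)) := by
    rw [Real.rpow_neg (le_of_lt hb0), Real.rpow_neg (le_of_lt hQ0), hbp]
    have hQp : (0 : ℝ) < Q ^ (p / 2) := Real.rpow_pos_of_pos hQ0 _
    field_simp
  calc Q * C * (1 + (x + b) ^ 2) ^ (-(p / 2))
      ≤ Q * C * ((x + 1) ^ (-(p / 2)) * b ^ (-(p / 2))) := by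
        rw [← h3]
        exact mul_le_mul_of_nonneg_left h2 (by positivity)
    _ = Q ^ (-(p / 2)) * (x + 1) ^ (-(p / 2)) := by
        rw [← hkey]; ring

/-- for a real `p > 2` and any `c : ℕ* → ℕ*`, setting
`b_q = q·(q·c_q)^(2/p)`, the double series
`∑_{q ≥ 1} ∑_{n ∈ ℤ} q·c_q·(1 + (|n| + b_q)²)^(−p/2)` converges. -/
theorem summable_p_gt_two (p : ℝ) (hp : 2 < p) (c : ℕ → ℕ) (hc : ∀ q, 1 ≤ q → 1 ≤ c q) :
    Summable (fun x : {q : ℕ // 1 ≤ q} × ℤ =>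
      (x.1.1 : ℝ) * (c x.1.1 : ℝ) *
        (1 + ((|x.2| : ℝ) +
          (x.1.1 : ℝ) * ((x.1.1 : ℝ) * (c x.1.1 : ℝ)) ^ (2 / p)) ^ 2) ^ (-(p / 2))) := by
  have hp2 : -(p / 2) < -1 := by linarith
  -- summable majorant
  have hN : Summable (fun n : ℕ => (n : ℝ) ^ (-(p / 2))) :=
    Real.summable_nat_rpow.2 hp2
  have hN1 : Summable (fun n : ℕ => ((n : ℝ) + 1) ^ (-(p / 2))) := by
    have := (summable_nat_add_iff 1).2 hN
    simpa [Nat.cast_add] using this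
  have hZ : Summable (fun n : ℤ => ((|n| : ℝ) + 1) ^ (-(p / 2))) := by
    apply Summable.of_nat_of_neg
    · simpa using hN1
    · simpa using hN1
  have hQs : Summable (fun q : {q : ℕ // 1 ≤ q} => ((q : ℕ) : ℝ) ^ (-(p / 2))) := by
    exact (Real.summable_nat_rpow.2 hp2).subtype _
  have hg : Summable (fun x : {q : ℕ // 1 ≤ q} × ℤ =>
      ((x.1.1 : ℕ) : ℝ) ^ (-(p / 2)) * ((|x.2| : ℝ) + 1) ^ (-(p / 2))) :=
    hQs.mul_of_nonneg hZ (fun q => by positivity) (fun n => by positivity)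
  apply Summable.of_nonneg_of_le _ _ hg
  · intro x; positivity
  · rintro ⟨⟨q, hq⟩, n⟩
    have hQ : (1 : ℝ) ≤ (q : ℝ) := by exact_mod_cast hq
    have hC : (1 : ℝ) ≤ (c q : ℝ) := by exact_mod_cast hc q hq
    simpa using key_bound p hp (q : ℝ) (c q : ℝ) hQ hC (|n| : ℝ) (by positivity)
end

section
/- Let c : ℕ* → ℕ* be any function with c_q ≥ 1 for all q, and set b_q := q³·c_q for each q ≥ 1. Then the double series Σ_{q≥1} Σ_{n∈ℤ} q·c_q·(1 + (|n| + b_q)²)^{−1} converges. -/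
/-!
With `b = q³ c_q`, the inequality `(1 + x²)⁻¹ ≤ 4 ((x + 1)⁻¹ - (x + 2)⁻¹)` for `x ≥ 0` makes the
inner series over `n ∈ ℤ` telescope to at most `8 / (b + 1)`. Hence the `q`-th inner sum is at
most `8 q c_q / (q³ c_q + 1) ≤ 8 / q²`, which is summable over `q ≥ 1`.
-/

lemma inv_one_add_sq_le_four_mul_sub {x : ℝ} (hx : 0 ≤ x) :
    (1 + x ^ 2)⁻¹ ≤ 4 * ((x + 1)⁻¹ - (x + 2)⁻¹) := by
  have h : 4 * ((x + 1)⁻¹ - (x + 2)⁻¹) = 4 / ((x + 1) * (x + 2)) := by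
    field_simp
    ring
  rw [h, inv_eq_one_div, div_le_div_iff₀ (by positivity) (by positivity)]
  nlinarith [sq_nonneg (x - 1 / 2)]

lemma sum_range_inv_one_add_sq_le {b : ℝ} (hb : 0 ≤ b) (N : ℕ) :
    ∑ m ∈ Finset.range N, (1 + ((m : ℝ) + b) ^ 2)⁻¹ ≤ 4 / (b + 1) := by
  set u : ℕ → ℝ := fun m => ((m : ℝ) + b + 1)⁻¹
  calc ∑ m ∈ Finset.range N, (1 + ((m : ℝ) + b) ^ 2)⁻¹
      ≤ ∑ m ∈ Finset.range N, 4 * (u m - u (m + 1)) := by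
        refine Finset.sum_le_sum fun m _ =>
          (inv_one_add_sq_le_four_mul_sub (by positivity)).trans_eq ?_
        simp only [u]
        push_cast
        ring
    _ = 4 * (u 0 - u N) := by rw [← Finset.mul_sum, Finset.sum_range_sub']
    _ ≤ 4 * u 0 := by
        have : 0 ≤ u N := by positivity
        linarith
    _ = 4 / (b + 1) := by simp [u, div_eq_mul_inv]

lemma summable_inv_one_add_sq {b : ℝ} (hb : 0 ≤ b) :
    Summable fun m : ℕ => (1 + ((m : ℝ) + b) ^ 2)⁻¹ :=
  summable_of_sum_range_le (fun _ => by positivity) (sum_range_inv_one_add_sq_le hb)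

lemma tsum_inv_one_add_sq_le {b : ℝ} (hb : 0 ≤ b) :
    ∑' m : ℕ, (1 + ((m : ℝ) + b) ^ 2)⁻¹ ≤ 4 / (b + 1) :=
  Real.tsum_le_of_sum_range_le (fun _ => by positivity) (sum_range_inv_one_add_sq_le hb)

lemma Summable.int_comp_abs {g : ℝ → ℝ} (hg : Summable fun n : ℕ => g n) :
    Summable fun n : ℤ => g |(n : ℝ)| :=
  Summable.of_nat_of_neg (by simpa using hg) (by simpa using hg)

lemma tsum_int_comp_abs_le {g : ℝ → ℝ} (hg : Summable fun n : ℕ => g n) (h0 : 0 ≤ g 0) :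
    ∑' n : ℤ, g |(n : ℝ)| ≤ 2 * ∑' n : ℕ, g n := by
  rw [Summable.tsum_of_nat_of_neg (by simpa using hg) (by simpa using hg)]
  simp only [Int.cast_natCast, Nat.abs_cast, Int.cast_neg, abs_neg, Int.cast_zero, abs_zero]
  linarith

lemma summable_int_inv_one_add_sq {b : ℝ} (hb : 0 ≤ b) :
    Summable fun n : ℤ => (1 + (|(n : ℝ)| + b) ^ 2)⁻¹ :=
  Summable.int_comp_abs (g := fun x => (1 + (x + b) ^ 2)⁻¹) (summable_inv_one_add_sq hb)

lemma tsum_int_inv_one_add_sq_le {b : ℝ} (hb : 0 ≤ b) :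
    ∑' n : ℤ, (1 + (|(n : ℝ)| + b) ^ 2)⁻¹ ≤ 8 / (b + 1) := by
  have h := tsum_int_comp_abs_le (g := fun x => (1 + (x + b) ^ 2)⁻¹)
    (summable_inv_one_add_sq hb) (by positivity)
  calc _ ≤ 2 * (4 / (b + 1)) := h.trans (by gcongr; exact tsum_inv_one_add_sq_le hb)
    _ = 8 / (b + 1) := by ring

theorem summable_p_eq_two_general (c : ℕ → ℕ) :
    Summable (fun x : {q : ℕ // 1 ≤ q} × ℤ =>
      (x.1.1 : ℝ) * (c x.1.1 : ℝ) *
        (1 + ((|x.2| : ℝ) + (x.1.1 : ℝ) ^ 3 * (c x.1.1 : ℝ)) ^ 2)⁻¹) := by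
  have hb (q : {q : ℕ // 1 ≤ q}) : (0 : ℝ) ≤ (q.1 : ℝ) ^ 3 * c q.1 := by positivity
  refine (summable_prod_of_nonneg fun x => ?_).mpr ⟨fun q => ?_, ?_⟩
  · positivity
  · exact (summable_int_inv_one_add_sq (hb q)).mul_left ((q.1 : ℝ) * c q.1)
  have h_dom : Summable fun q : {q : ℕ // 1 ≤ q} => 8 * (1 / (q.1 : ℝ) ^ 2) :=
    ((Real.summable_one_div_nat_pow.mpr one_lt_two).subtype _).mul_left 8
  refine h_dom.of_nonneg_of_le (fun q => tsum_nonneg fun n => by positivity) fun q => ?_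
  have hq : (1 : ℝ) ≤ q.1 := by exact_mod_cast q.2
  calc ∑' n : ℤ, (q.1 : ℝ) * c q.1 * (1 + (|(n : ℝ)| + (q.1 : ℝ) ^ 3 * c q.1) ^ 2)⁻¹
      ≤ q.1 * c q.1 * (8 / ((q.1 : ℝ) ^ 3 * c q.1 + 1)) := by
        rw [tsum_mul_left]
        gcongr
        exact tsum_int_inv_one_add_sq_le (hb q)
    _ ≤ 8 * (1 / (q.1 : ℝ) ^ 2) := by
        rw [mul_one_div, le_div_iff₀ (by positivity)]
        field_simp
        nlinarith

/-- for any `c : ℕ* → ℕ*`, setting `b_q = q³·c_q`, the double series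
`∑_{q ≥ 1} ∑_{n ∈ ℤ} q·c_q·(1 + (|n| + b_q)²)⁻¹` converges (the `p = 2` summability
estimate). -/
theorem summable_p_eq_two (c : ℕ → ℕ) (hc : ∀ q, 1 ≤ q → 1 ≤ c q) :
    Summable (fun x : {q : ℕ // 1 ≤ q} × ℤ =>
      (x.1.1 : ℝ) * (c x.1.1 : ℝ) *
        (1 + ((|x.2| : ℝ) + (x.1.1 : ℝ) ^ 3 * (c x.1.1 : ℝ)) ^ 2)⁻¹) :=
  summable_p_eq_two_general c
end
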